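/- Let g : ℝ^d → ℝ ∪ {+∞} be proper, convex, closed, let α > 0, λ, λ' > 0, and a ∈ ℝ^d. Define φ_λ(u) = ½‖u − a‖₂² + α λ g(u), and let u' = prox_{α λ' g}(a) and u* = prox_{α λ g}(a). Then for all u ∈ ℝ^d: φ_λ(u) ≥ φ_λ(u') − α|λ' − λ| · |g(u') − g(u*)|; that is, u' is an ε-minimizer of φ_λ (equivalently 0 ∈ ∂_ε φ_λ(u')) with ε = α|λ' − λ| · |g(u') − g(u*)|. -/

import Mathlib

/-!
Let `c = αλ`, `c' = αλ'`. Comparing `u'` with `u*` in the problem it minimizes gives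
`½‖u' − a‖² + c' g(u') ≤ ½‖u* − a‖² + c' g(u*)`; trading `c'` for `c` costs at most
`|c' − c|·|g(u') − g(u*)|`, and `u*` minimizes `φ_λ`. Points where `g = +∞` are trivial,
and once `g(u) < +∞` for some `u`, both proximal points have finite `g`.
-/

open scoped RealInnerProductSpace

/-- `p` is the proximal point of `F` at `a`, i.e. `p` minimizes `u ↦ ½‖u − a‖² + F(u)`
(for a proper convex closed `F` this minimizer exists and is unique, so this predicate
characterizes `p = prox_F(a)`). -/
def IsProx {E : Type*} [NormedAddCommGroup E] (F : E → EReal) (a p : E) : Prop :=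
  ∀ u, ((1 / 2 * ‖p - a‖ ^ 2 : ℝ) : EReal) + F p ≤ ((1 / 2 * ‖u - a‖ ^ 2 : ℝ) : EReal) + F u

theorem EReal.coe_mul_ne_top_iff_of_pos {c : ℝ} (hc : 0 < c) {x : EReal} :
    (c : EReal) * x ≠ ⊤ ↔ x ≠ ⊤ := by
  simp [EReal.mul_ne_top, hc.le, hc.not_ge]

namespace IsProx

variable {E : Type*} [NormedAddCommGroup E]

theorem ne_top {F : E → EReal} {a p u : E} (hp : IsProx F a p) (hu : F u ≠ ⊤) : F p ≠ ⊤ := by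
  intro htop
  have h := hp u
  rw [htop, EReal.add_top_of_ne_bot (EReal.coe_ne_bot _), top_le_iff] at h
  exact EReal.add_ne_top (EReal.coe_ne_top _) hu h

theorem ne_top_of_mul {g : E → EReal} {c : ℝ} (hc : 0 < c) {a p u : E}
    (hp : IsProx (fun w => (c : EReal) * g w) a p) (hu : g u ≠ ⊤) : g p ≠ ⊤ :=
  (EReal.coe_mul_ne_top_iff_of_pos hc).1 <|
    hp.ne_top ((EReal.coe_mul_ne_top_iff_of_pos hc).2 hu)

theorem toReal_le {g : E → EReal} {c : ℝ} {a p u : E}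
    (hp : IsProx (fun w => (c : EReal) * g w) a p) (hg_bot : ∀ w, g w ≠ ⊥)
    (hgp : g p ≠ ⊤) (hgu : g u ≠ ⊤) :
    1 / 2 * ‖p - a‖ ^ 2 + c * (g p).toReal ≤ 1 / 2 * ‖u - a‖ ^ 2 + c * (g u).toReal := by
  have h := hp u
  dsimp only at h
  rw [← EReal.coe_toReal hgp (hg_bot p), ← EReal.coe_toReal hgu (hg_bot u)] at h
  exact_mod_cast h

end IsProx

theorem add_mul_sub_abs_mul_le_of_add_mul_le {q q' G G' c c' : ℝ}
    (h : q' + c' * G' ≤ q + c' * G) : q' + c * G' - |c' - c| * |G' - G| ≤ q + c * G := by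
  have : (c - c') * (G' - G) ≤ |c' - c| * |G' - G| := by
    rw [abs_sub_comm c' c, ← abs_mul]
    exact le_abs_self _
  linarith

theorem prox_with_perturbed_parameter_is_eps_minimizer_general {d : ℕ}
    (g : EuclideanSpace ℝ (Fin d) → EReal)
    (hg_bot : ∀ u, g u ≠ ⊥)
    (α lam lam' : ℝ) (hα : 0 < α) (hlam : 0 < lam) (hlam' : 0 < lam')
    (a u' ustar : EuclideanSpace ℝ (Fin d))
    (hu' : IsProx (fun w => ((α * lam' : ℝ) : EReal) * g w) a u')
    (hustar : IsProx (fun w => ((α * lam : ℝ) : EReal) * g w) a ustar) :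
    ∀ u : EuclideanSpace ℝ (Fin d),
      ((1 / 2 * ‖u - a‖ ^ 2 : ℝ) : EReal) + ((α * lam : ℝ) : EReal) * g u
        ≥ (((1 / 2 * ‖u' - a‖ ^ 2 : ℝ) : EReal) + ((α * lam : ℝ) : EReal) * g u')
          - ((α * |lam' - lam| * |(g u').toReal - (g ustar).toReal| : ℝ) : EReal) := by
  intro u
  have hc : 0 < α * lam := mul_pos hα hlam
  have hc' : 0 < α * lam' := mul_pos hα hlam'
  by_cases hu : g u = ⊤
  · rw [hu, EReal.coe_mul_top_of_pos hc, EReal.add_top_of_ne_bot (EReal.coe_ne_bot _)]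
    exact le_top
  have hu'_fin := hu'.ne_top_of_mul hc' hu
  have hustar_fin := hustar.ne_top_of_mul hc hu
  have h_perturbed := add_mul_sub_abs_mul_le_of_add_mul_le (c := α * lam)
    (hu'.toReal_le hg_bot hu'_fin hustar_fin)
  have h_min := hustar.toReal_le hg_bot hustar_fin hu
  rw [← mul_sub, abs_mul, abs_of_pos hα] at h_perturbed
  rw [← EReal.coe_toReal hu'_fin (hg_bot u'), ← EReal.coe_toReal hu (hg_bot u)]
  exact_mod_cast h_perturbed.trans h_min

/-- With `φ_λ(u) = ½‖u − a‖² + αλ g(u)`, `u' = prox_{αλ' g}(a)` and `u* = prox_{αλ g}(a)`,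
one has `φ_λ(u) ≥ φ_λ(u') − α|λ' − λ|·|g(u') − g(u*)|` for all `u`; i.e. `u'` is an
`ε`-minimizer of `φ_λ` (equivalently `0 ∈ ∂_ε φ_λ(u')`) with
`ε = α|λ' − λ|·|g(u') − g(u*)|`. -/
theorem prox_with_perturbed_parameter_is_eps_minimizer {d : ℕ}
    (g : EuclideanSpace ℝ (Fin d) → EReal)
    (hg_top : ∃ u, g u ≠ ⊤) (hg_bot : ∀ u, g u ≠ ⊥)
    (hg_conv : ∀ u v : EuclideanSpace ℝ (Fin d), ∀ a b : ℝ, 0 ≤ a → 0 ≤ b → a + b = 1 →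
      g (a • u + b • v) ≤ (a : EReal) * g u + (b : EReal) * g v)
    (hg_lsc : LowerSemicontinuous g)
    (α lam lam' : ℝ) (hα : 0 < α) (hlam : 0 < lam) (hlam' : 0 < lam')
    (a u' ustar : EuclideanSpace ℝ (Fin d))
    (hu' : IsProx (fun w => ((α * lam' : ℝ) : EReal) * g w) a u')
    (hustar : IsProx (fun w => ((α * lam : ℝ) : EReal) * g w) a ustar) :
    ∀ u : EuclideanSpace ℝ (Fin d),
      ((1 / 2 * ‖u - a‖ ^ 2 : ℝ) : EReal) + ((α * lam : ℝ) : EReal) * g u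
        ≥ (((1 / 2 * ‖u' - a‖ ^ 2 : ℝ) : EReal) + ((α * lam : ℝ) : EReal) * g u')
          - ((α * |lam' - lam| * |(g u').toReal - (g ustar).toReal| : ℝ) : EReal) :=
  prox_with_perturbed_parameter_is_eps_minimizer_general g hg_bot α lam lam' hα hlam hlam' a u'
    ustar hu' hustar
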